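/- Let Z be a nonempty irreducible closed subset of Esp_C and define 𝒫(Z) := {a ∈ E : U(a) ∩ Z ≠ ∅}, where U(a) := {P ∈ C : a ∈ P}. Then 𝒫(Z) contains 0 and satisfies a ⊕ b ∈ 𝒫(Z) if and only if a ∈ 𝒫(Z) and b ∈ 𝒫(Z). -/

import Mathlib

/-!
Since `a ⊕ b ∈ P ↔ a ∈ P ∧ b ∈ P` for every `P ∈ C`, the basic opens satisfy
`U(a ⊕ b) = U(a) ∩ U(b)`. An irreducible set meets the intersection of two opens exactly when it
meets each of them, and `U(0)` is all of `C`.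
-/

/-- The basic open set `U(a) = {P ∈ C : a ∈ P}`. -/
def espU {E : Type*} (C : Set (Set E)) (a : E) : Set C := {P : C | a ∈ (P : Set E)}

/-- The topology on `C` generated by the basis `{U(a)}_{a ∈ E}`. -/
def espTop {E : Type*} (C : Set (Set E)) : TopologicalSpace C :=
  TopologicalSpace.generateFrom {s | ∃ a : E, s = espU C a}

theorem IsPreirreducible.inter_inter_nonempty_iff {X : Type*} [TopologicalSpace X]
    {s u v : Set X} (hs : IsPreirreducible s) (hu : IsOpen u) (hv : IsOpen v) :
    (u ∩ v ∩ s).Nonempty ↔ (u ∩ s).Nonempty ∧ (v ∩ s).Nonempty := by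
  refine ⟨fun h ↦ ⟨h.mono (by gcongr; exact Set.inter_subset_left),
    h.mono (by gcongr; exact Set.inter_subset_right)⟩, fun ⟨hus, hvs⟩ ↦ ?_⟩
  obtain ⟨x, hxs, hxu, hxv⟩ := hs u v hu hv (Set.inter_comm u s ▸ hus) (Set.inter_comm v s ▸ hvs)
  exact ⟨x, ⟨hxu, hxv⟩, hxs⟩

section Esp

open Topology

variable {E : Type*} {C : Set (Set E)}

theorem isOpen_espU (a : E) : IsOpen[espTop C] (espU C a) :=
  TopologicalSpace.GenerateOpen.basic _ ⟨a, rfl⟩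

theorem espU_eq_univ {z : E} (hz : ∀ P ∈ C, z ∈ P) : espU C z = Set.univ :=
  Set.eq_univ_of_forall fun P ↦ hz P P.2

theorem espU_op {op : E → E → E} (hop : ∀ P ∈ C, ∀ a b : E, op a b ∈ P ↔ a ∈ P ∧ b ∈ P)
    (a b : E) : espU C (op a b) = espU C a ∩ espU C b :=
  Set.ext fun P ↦ hop P P.2 a b

end Esp

theorem stmt_6_general {E : Type*} (op : E → E → E) (z : E) (C : Set (Set E))
    (hC : ∀ P ∈ C, z ∈ P ∧ ∀ a b : E, op a b ∈ P ↔ a ∈ P ∧ b ∈ P)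
    (Z : Set C) (hirr : @IsIrreducible _ (espTop C) Z) :
    z ∈ {a : E | (espU C a ∩ Z).Nonempty} ∧
    ∀ a b : E, op a b ∈ {c : E | (espU C c ∩ Z).Nonempty} ↔
      (a ∈ {c : E | (espU C c ∩ Z).Nonempty} ∧ b ∈ {c : E | (espU C c ∩ Z).Nonempty}) := by
  let _ : TopologicalSpace C := espTop C
  refine ⟨?_, fun a b ↦ ?_⟩
  · rw [Set.mem_ofPred_eq, espU_eq_univ fun P hP ↦ (hC P hP).1, Set.univ_inter]
    exact hirr.nonempty
  · simp only [Set.mem_ofPred_eq, espU_op fun P hP ↦ (hC P hP).2]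
    exact hirr.isPreirreducible.inter_inter_nonempty_iff (isOpen_espU a) (isOpen_espU b)

theorem stmt_6 {E : Type*} (op : E → E → E) (z : E) (C : Set (Set E))
    (hC : ∀ P ∈ C, z ∈ P ∧ ∀ a b : E, op a b ∈ P ↔ a ∈ P ∧ b ∈ P)
    (Z : Set C) (hirr : @IsIrreducible _ (espTop C) Z) (hcl : @IsClosed _ (espTop C) Z) :
    z ∈ {a : E | (espU C a ∩ Z).Nonempty} ∧
    ∀ a b : E, op a b ∈ {c : E | (espU C c ∩ Z).Nonempty} ↔
      (a ∈ {c : E | (espU C c ∩ Z).Nonempty} ∧ b ∈ {c : E | (espU C c ∩ Z).Nonempty}) :=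
  stmt_6_general op z C hC Z hirr
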